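/- arXiv:1910.13633 — 3 statements merged into one kernel-verified Lean document; each statement's English description precedes it below -/
import Mathlib

section
/- Necessity (Theorem 1, 'only if' direction; Lemma A.2): In any disclosure game, if (σ, a, μ) is a truth-leaning equilibrium, then the sender's value function V satisfies the Theorem-1 conditions: (1) V is non-decreasing from (E, ≼) to (ℝ, ≤); (2) ξ(V⁻¹(x)) = x for every x in the range of V; (3) ξ(L) ≥ x for every x in the range of V and every lower contour set L in V⁻¹(x). -/
open scoped BigOperators

universe u

/-- A disclosure game: a countable evidence space `E` with a disclosure rule
(a preorder `r`, where `r m e` means message `m` is feasible for endowment `e`)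
satisfying the lower-bound condition (A4′), a prior `π0 ∈ (0,1)`, evidence
distributions `FG`, `FB` in each state, and a strictly increasing receiver
response `φ` on `[0,1]`. -/
structure DGame (E : Type u) where
  r : E → E → Prop
  r_refl : ∀ e, r e e
  r_trans : ∀ {a b c : E}, r a b → r b c → r a c
  a4 : ∀ f : ℕ → E, (∀ n, r (f (n + 1)) (f n)) → ∃ N, ∀ n ≥ N, r (f N) (f n)
  π0 : ℝ
  π0_pos : 0 < π0
  π0_lt_one : π0 < 1
  FG : E → ℝ
  FB : E → ℝ
  FG_nonneg : ∀ e, 0 ≤ FG e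
  FB_nonneg : ∀ e, 0 ≤ FB e
  FG_hasSum : HasSum FG 1
  FB_hasSum : HasSum FB 1
  FGB_pos : ∀ e, 0 < FG e + FB e
  φ : ℝ → ℝ
  φ_mono : StrictMonoOn φ (Set.Icc (0 : ℝ) 1)

namespace DGame

variable {E : Type u} (G : DGame E)

/-- The posterior belief `ν(A)` that the state is good conditional on the
evidence lying in `A`. -/
noncomputable def nu (A : Set E) : ℝ :=
  ((∑' e : A, G.FG e) * G.π0) /
    ((∑' e : A, G.FG e) * G.π0 + (∑' e : A, G.FB e) * (1 - G.π0))

/-- `ξ(A) = φ(ν(A))`. -/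
noncomputable def xi (A : Set E) : ℝ := G.φ (G.nu A)

/-- `L` is a (nonempty) lower contour set in `A`. -/
def IsLCS (A L : Set E) : Prop :=
  L.Nonempty ∧ L ⊆ A ∧ ∀ e ∈ L, ∀ e' ∈ A, G.r e' e → e' ∈ L

/-- The Theorem-1 conditions on a candidate value function `V`. -/
def Thm1Conds (V : E → ℝ) : Prop :=
  (∀ e e', G.r e e' → V e ≤ V e') ∧
  (∀ x ∈ Set.range V, G.xi (V ⁻¹' {x}) = x) ∧
  (∀ x ∈ Set.range V, ∀ L : Set E, G.IsLCS (V ⁻¹' {x}) L → x ≤ G.xi L)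

/-- A truth-leaning equilibrium `(σ, act, μ)` of the disclosure game. -/
structure Eqm where
  σ : E → E → ℝ
  act : E → ℝ
  μ : E → ℝ
  σ_nonneg : ∀ e m, 0 ≤ σ e m
  σ_hasSum : ∀ e, HasSum (σ e) 1
  feasible : ∀ e m, 0 < σ e m → G.r m e
  μ_mem : ∀ m, μ m ∈ Set.Icc (0 : ℝ) 1
  sender_opt : ∀ e m, 0 < σ e m → ∀ m', G.r m' e → act m' ≤ act m
  receiver_opt : ∀ m, act m = G.φ (μ m)
  bayes : ∀ m, (∃ e, 0 < σ e m) →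
    μ m = (∑' e : {e : E // G.r m e}, σ e.1 m * G.FG e.1 * G.π0) /
      (∑' e : {e : E // G.r m e}, σ e.1 m * (G.FG e.1 * G.π0 + G.FB e.1 * (1 - G.π0)))
  truth_leaning : ∀ e, (∀ m, G.r m e → act m ≤ act e) → σ e e = 1
  offpath : ∀ m, (¬ ∃ e, 0 < σ e m) → μ m = G.nu {m}

/-- `V` is the sender's value function of the equilibrium `Q`. -/
def IsValueFn (Q : G.Eqm) (V : E → ℝ) : Prop :=
  ∀ e m, 0 < Q.σ e m → V e = Q.act m

end DGame

/-!
Fix a value `x` of `V`, a lower contour set `L` of `V⁻¹(x)` and `c ∈ [0,1]` with `φ(c) = x`.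
Every message `m` sent from `L` induces the action `x`, so its posterior is `c`, and Bayes'
rule says that the excess `F_G π₀ - c (F_G π₀ + F_B (1 - π₀))` of its senders, weighted by
`σ(m|·)`, sums to zero. A sender `e ∉ L` of such an `m` has value `x` but does not disclose
itself (`m ∈ L`), so by truth-leaning `e` is off path and strictly prefers `m`: `φ(ν(e)) < x`,
i.e. its excess is negative. Hence the weighted excess of `L` at every message is nonnegative;
summing over messages, the excess of `L` itself is nonnegative, which says `ν(L) ≥ c`. For
`L = V⁻¹(x)` there are no senders outside `L`, and the same computation gives `ν(L) = c`.
-/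

open Set

theorem tsum_tsum_kernel_mul_eq_tsum {α β : Type*} {σ : α → β → ℝ}
    (hσ0 : ∀ a b, 0 ≤ σ a b) (hσ : ∀ a, HasSum (σ a) 1) {h : α → ℝ} (hh : Summable h) :
    ∑' b, ∑' a, σ a b * h a = ∑' a, h a := by
  have habs : Summable fun p : α × β => σ p.1 p.2 * |h p.1| :=
    (summable_prod_of_nonneg fun p => mul_nonneg (hσ0 _ _) (abs_nonneg _)).2
      ⟨fun a => ((hσ a).summable.mul_right |h a| :),
        by simpa only [tsum_mul_right, (hσ _).tsum_eq, one_mul] using hh.abs⟩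
  have hsum : Summable (Function.uncurry fun a b => σ a b * h a) :=
    habs.of_norm_bounded fun p => by
      show |σ p.1 p.2 * h p.1| ≤ _
      rw [abs_mul, abs_of_nonneg (hσ0 _ _)]
  rw [hsum.tsum_comm]
  simp only [tsum_mul_right, (hσ _).tsum_eq, one_mul]

namespace DGame

variable {E : Type u} (G : DGame E)

noncomputable def mass (A : Set E) : ℝ :=
  (∑' e : A, G.FG e) * G.π0 + (∑' e : A, G.FB e) * (1 - G.π0)

/-- Summed over `A`, the excess has the sign of `ν(A) - c` (`tsum_excess`). -/
noncomputable def excess (c : ℝ) (e : E) : ℝ :=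
  G.FG e * G.π0 - c * (G.FG e * G.π0 + G.FB e * (1 - G.π0))

lemma one_sub_π0_pos : 0 < 1 - G.π0 := sub_pos.2 G.π0_lt_one

lemma summable_excess (c : ℝ) : Summable (G.excess c) := by
  have hG := G.FG_hasSum.summable.mul_right G.π0
  have hB := G.FB_hasSum.summable.mul_right (1 - G.π0)
  exact hG.sub ((hG.add hB).mul_left c)

lemma total_pos (e : E) : 0 < G.FG e * G.π0 + G.FB e * (1 - G.π0) := by
  rcases (G.FG_nonneg e).eq_or_lt with h | h
  · have : 0 < G.FB e := by linarith [G.FGB_pos e]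
    nlinarith [G.one_sub_π0_pos, G.π0_pos]
  · nlinarith [G.one_sub_π0_pos, G.π0_pos, G.FB_nonneg e]

lemma mass_pos {A : Set E} (hA : A.Nonempty) : 0 < G.mass A := by
  obtain ⟨e, he⟩ := hA
  have hG : G.FG e ≤ ∑' e : A, G.FG e :=
    (G.FG_hasSum.summable.subtype A).le_tsum ⟨e, he⟩ fun j _ => G.FG_nonneg j.1
  have hB : G.FB e ≤ ∑' e : A, G.FB e :=
    (G.FB_hasSum.summable.subtype A).le_tsum ⟨e, he⟩ fun j _ => G.FB_nonneg j.1
  unfold mass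
  nlinarith [G.total_pos e, G.one_sub_π0_pos, G.π0_pos]

lemma nu_mem_Icc (A : Set E) : G.nu A ∈ Icc (0 : ℝ) 1 := by
  have hG : 0 ≤ (∑' e : A, G.FG e) * G.π0 :=
    mul_nonneg (tsum_nonneg fun e => G.FG_nonneg e) G.π0_pos.le
  have hB : 0 ≤ (∑' e : A, G.FB e) * (1 - G.π0) :=
    mul_nonneg (tsum_nonneg fun e => G.FB_nonneg e) G.one_sub_π0_pos.le
  exact ⟨div_nonneg hG (by linarith), div_le_one_of_le₀ (by linarith) (by linarith)⟩

lemma tsum_excess {A : Set E} (hA : A.Nonempty) (c : ℝ) :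
    ∑' e : A, G.excess c e = (G.nu A - c) * G.mass A := by
  have hG : Summable fun e : A => G.FG e := G.FG_hasSum.summable.subtype A
  have hB : Summable fun e : A => G.FB e := G.FB_hasSum.summable.subtype A
  have hnu : G.nu A * G.mass A = (∑' e : A, G.FG e) * G.π0 :=
    div_mul_cancel₀ _ (G.mass_pos hA).ne'
  simp only [excess]
  rw [Summable.tsum_sub (hG.mul_right _) (((hG.mul_right _).add (hB.mul_right _)).mul_left c),
    tsum_mul_left, Summable.tsum_add (hG.mul_right _) (hB.mul_right _), tsum_mul_right,
    tsum_mul_right, sub_mul, hnu, mass]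

lemma le_nu_iff {A : Set E} (hA : A.Nonempty) {c : ℝ} :
    c ≤ G.nu A ↔ 0 ≤ ∑' e : A, G.excess c e := by
  rw [G.tsum_excess hA, mul_nonneg_iff_of_pos_right (G.mass_pos hA), sub_nonneg]

lemma excess_nonpos_iff {c : ℝ} (e : E) : G.excess c e ≤ 0 ↔ G.nu {e} ≤ c := by
  have h := G.tsum_excess (singleton_nonempty e) c
  rw [tsum_singleton e (G.excess c)] at h
  have hm := G.mass_pos (singleton_nonempty e)
  rw [h]
  constructor <;> intro h' <;> nlinarith

namespace Eqm

variable {G} (Q : G.Eqm)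

lemma σ_le_one (e m : E) : Q.σ e m ≤ 1 :=
  le_hasSum (Q.σ_hasSum e) m fun j _ => Q.σ_nonneg e j

lemma exists_σ_pos (e : E) : ∃ m, 0 < Q.σ e m := by
  by_contra! h
  have hsum := Q.σ_hasSum e
  rw [show Q.σ e = 0 from funext fun m => le_antisymm (h m) (Q.σ_nonneg e m)] at hsum
  exact one_ne_zero (hsum.unique hasSum_zero)

lemma σ_eq_zero_of_σ_self_eq_one {e m : E} (h : Q.σ e e = 1) (hm : m ≠ e) : Q.σ e m = 0 := by
  classical
  have hsum := sum_le_hasSum {e, m} (fun i _ => Q.σ_nonneg e i) (Q.σ_hasSum e)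
  rw [Finset.sum_pair hm.symm] at hsum
  linarith [Q.σ_nonneg e m]

lemma summable_σ_mul (m : E) {f : E → ℝ} (hf : Summable f) :
    Summable fun e => Q.σ e m * f e :=
  hf.abs.of_norm_bounded fun e => by
    rw [Real.norm_eq_abs, abs_mul, abs_of_nonneg (Q.σ_nonneg e m)]
    exact mul_le_of_le_one_left (abs_nonneg _) (Q.σ_le_one e m)

lemma tsum_σ_mul_eq_zero {A : Set E} {m : E} (hm : ¬ ∃ e ∈ A, 0 < Q.σ e m) (f : E → ℝ) :
    ∑' e : A, Q.σ e m * f e = 0 := by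
  push Not at hm
  refine (tsum_congr fun e => ?_).trans tsum_zero
  rw [le_antisymm (hm e e.2) (Q.σ_nonneg e m), zero_mul]

lemma tsum_σ_mul_excess_eq_zero {m : E} (hm : ∃ e, 0 < Q.σ e m) :
    ∑' e, Q.σ e m * G.excess (Q.μ m) e = 0 := by
  obtain ⟨e₀, he₀⟩ := hm
  set g := fun e => G.FG e * G.π0
  set t := fun e => G.FG e * G.π0 + G.FB e * (1 - G.π0)
  have hsupp (f : E → ℝ) : Function.support (fun e => Q.σ e m * f e) ⊆ {e | G.r m e} :=
    fun e he => Q.feasible e m ((Q.σ_nonneg e m).lt_of_ne' (left_ne_zero_of_mul he))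
  have hg : Summable g := G.FG_hasSum.summable.mul_right _
  have ht : Summable t := hg.add (G.FB_hasSum.summable.mul_right _)
  have hnum : ∑' e : {e // G.r m e}, Q.σ e.1 m * G.FG e.1 * G.π0 = ∑' e, Q.σ e m * g e := by
    rw [← tsum_subtype_eq_of_support_subset (hsupp g)]
    exact tsum_congr fun e => mul_assoc _ _ _
  have hden : ∑' e : {e // G.r m e}, Q.σ e.1 m * t e.1 = ∑' e, Q.σ e m * t e :=
    tsum_subtype_eq_of_support_subset (hsupp t)
  have hden_pos : 0 < ∑' e, Q.σ e m * t e :=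
    (mul_pos he₀ (G.total_pos e₀)).trans_le <| (Q.summable_σ_mul m ht).le_tsum e₀
      fun e _ => mul_nonneg (Q.σ_nonneg e m) (G.total_pos e).le
  have hbayes := Q.bayes m ⟨e₀, he₀⟩
  rw [hnum, hden, eq_div_iff hden_pos.ne'] at hbayes
  have hsplit (e : E) :
      Q.σ e m * G.excess (Q.μ m) e = Q.σ e m * g e - Q.μ m * (Q.σ e m * t e) := by
    simp only [excess, g, t]
    ring
  rw [tsum_congr hsplit, (Q.summable_σ_mul m hg).tsum_sub ((Q.summable_σ_mul m ht).mul_left _),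
    tsum_mul_left]
  exact sub_eq_zero.2 hbayes.symm

end Eqm

namespace IsValueFn

variable {G} {Q : G.Eqm} {V : E → ℝ}

lemma act_le (hV : G.IsValueFn Q V) {e m : E} (h : G.r m e) : Q.act m ≤ V e := by
  obtain ⟨m₀, hm₀⟩ := Q.exists_σ_pos e
  rw [hV e m₀ hm₀]
  exact Q.sender_opt e m₀ hm₀ m h

lemma mono (hV : G.IsValueFn Q V) {e e' : E} (h : G.r e e') : V e ≤ V e' := by
  obtain ⟨m₀, hm₀⟩ := Q.exists_σ_pos e
  rw [hV e m₀ hm₀]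
  exact hV.act_le (G.r_trans (Q.feasible e m₀ hm₀) h)

lemma act_eq_of_σ_pos (hV : G.IsValueFn Q V) {e m : E} (h : 0 < Q.σ e m) : Q.act m = V m :=
  le_antisymm (hV.act_le (G.r_refl m)) ((hV.mono (Q.feasible e m h)).trans_eq (hV e m h))

lemma act_lt_of_σ_pos (hV : G.IsValueFn Q V) {e m : E} (h : 0 < Q.σ e m) (hne : m ≠ e) :
    Q.act e < V e := by
  refine (hV.act_le (G.r_refl e)).lt_of_ne fun heq => h.ne' ?_
  exact Q.σ_eq_zero_of_σ_self_eq_one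
    (Q.truth_leaning e fun m' hm' => (hV.act_le hm').trans_eq heq.symm) hne

lemma nu_singleton_lt (hV : G.IsValueFn Q V) {e : E} {c : ℝ} (hc : c ∈ Icc (0 : ℝ) 1)
    (hφc : G.φ c = V e) (h : Q.act e < V e) : G.nu {e} < c := by
  have hoff : ¬ ∃ e', 0 < Q.σ e' e := fun ⟨_, he'⟩ => h.ne (hV.act_eq_of_σ_pos he')
  rw [Q.receiver_opt, Q.offpath e hoff, ← hφc] at h
  exact (G.φ_mono.lt_iff_lt (G.nu_mem_Icc _) hc).1 h

lemma exists_φ_eq (hV : G.IsValueFn Q V) {x : ℝ} (hx : x ∈ range V) :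
    ∃ c ∈ Icc (0 : ℝ) 1, G.φ c = x := by
  obtain ⟨e, rfl⟩ := hx
  obtain ⟨m, hm⟩ := Q.exists_σ_pos e
  exact ⟨Q.μ m, Q.μ_mem m, by rw [← Q.receiver_opt, hV e m hm]⟩

lemma μ_eq_of_σ_pos (hV : G.IsValueFn Q V) {e m : E} {c : ℝ} (hc : c ∈ Icc (0 : ℝ) 1)
    (hφc : G.φ c = V e) (h : 0 < Q.σ e m) : Q.μ m = c :=
  G.φ_mono.injOn (Q.μ_mem m) hc (by rw [← Q.receiver_opt, ← hV e m h, hφc])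

lemma tsum_σ_mul_excess_nonneg (hV : G.IsValueFn Q V) {x c : ℝ} {L : Set E}
    (hL : G.IsLCS (V ⁻¹' {x}) L) (hc : c ∈ Icc (0 : ℝ) 1) (hφc : G.φ c = x) (m : E) :
    0 ≤ ∑' e : L, Q.σ e m * G.excess c e := by
  by_cases hm : ∃ e ∈ L, 0 < Q.σ e m
  swap
  · exact (Q.tsum_σ_mul_eq_zero hm _).ge
  obtain ⟨e₀, he₀L, he₀⟩ := hm
  have hVe₀ : V e₀ = x := hL.2.1 he₀L
  have hmL : m ∈ L := hL.2.2 e₀ he₀L m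
    (((hV.act_eq_of_σ_pos he₀).symm.trans (hV e₀ m he₀).symm).trans hVe₀) (Q.feasible e₀ m he₀)
  have hout : ∑' e : ↑Lᶜ, Q.σ e m * G.excess c e ≤ 0 := by
    refine tsum_nonpos fun ⟨e, he⟩ => ?_
    rcases (Q.σ_nonneg e m).eq_or_lt with h | h
    · rw [← h, zero_mul]
    have hVe : V e = x := (hV e m h).trans ((hV e₀ m he₀).symm.trans hVe₀)
    have hlt := hV.act_lt_of_σ_pos h (ne_of_mem_of_not_mem hmL he)
    exact mul_nonpos_of_nonneg_of_nonpos h.le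
      ((G.excess_nonpos_iff e).2 (hV.nu_singleton_lt hc (hφc.trans hVe.symm) hlt).le)
  have hsum := Q.summable_σ_mul m (G.summable_excess c)
  have hbayes := Q.tsum_σ_mul_excess_eq_zero ⟨e₀, he₀⟩
  rw [hV.μ_eq_of_σ_pos hc (hφc.trans hVe₀.symm) he₀] at hbayes
  have hsplit := (hsum.subtype L).tsum_add_tsum_compl (hsum.subtype Lᶜ)
  linarith

lemma tsum_σ_mul_excess_preimage_eq_zero (hV : G.IsValueFn Q V) {x c : ℝ}
    (hc : c ∈ Icc (0 : ℝ) 1) (hφc : G.φ c = x) (m : E) :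
    ∑' e : V ⁻¹' {x}, Q.σ e m * G.excess c e = 0 := by
  by_cases hm : ∃ e ∈ V ⁻¹' {x}, 0 < Q.σ e m
  swap
  · exact Q.tsum_σ_mul_eq_zero hm _
  obtain ⟨e₀, he₀W, he₀⟩ := hm
  have hsupp : Function.support (fun e => Q.σ e m * G.excess c e) ⊆ V ⁻¹' {x} :=
    fun e he => (hV e m ((Q.σ_nonneg e m).lt_of_ne' (left_ne_zero_of_mul he))).trans
      ((hV e₀ m he₀).symm.trans he₀W)
  rw [tsum_subtype_eq_of_support_subset hsupp,
    ← hV.μ_eq_of_σ_pos hc (hφc.trans he₀W.symm) he₀]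
  exact Q.tsum_σ_mul_excess_eq_zero ⟨e₀, he₀⟩

lemma le_nu_of_isLCS (hV : G.IsValueFn Q V) {x c : ℝ} {L : Set E}
    (hL : G.IsLCS (V ⁻¹' {x}) L) (hc : c ∈ Icc (0 : ℝ) 1) (hφc : G.φ c = x) :
    c ≤ G.nu L := by
  have hs : Summable fun e : L => G.excess c e := (G.summable_excess c).subtype L
  rw [G.le_nu_iff hL.1, ← tsum_tsum_kernel_mul_eq_tsum (fun e m => Q.σ_nonneg e.1 m)
    (fun e => Q.σ_hasSum e.1) hs]
  exact tsum_nonneg (hV.tsum_σ_mul_excess_nonneg hL hc hφc)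

lemma nu_preimage_eq (hV : G.IsValueFn Q V) {x c : ℝ} (hx : x ∈ range V)
    (hc : c ∈ Icc (0 : ℝ) 1) (hφc : G.φ c = x) : G.nu (V ⁻¹' {x}) = c := by
  obtain ⟨e, he⟩ := hx
  have hne : (V ⁻¹' {x}).Nonempty := ⟨e, he⟩
  have hs : Summable fun e : V ⁻¹' {x} => G.excess c e := (G.summable_excess c).subtype _
  have h := G.tsum_excess hne c
  rw [← tsum_tsum_kernel_mul_eq_tsum (fun e m => Q.σ_nonneg e.1 m) (fun e => Q.σ_hasSum e.1) hs,
    tsum_congr (hV.tsum_σ_mul_excess_preimage_eq_zero hc hφc), tsum_zero] at h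
  exact sub_eq_zero.1 ((mul_eq_zero.1 h.symm).resolve_right (G.mass_pos hne).ne')

end IsValueFn

end DGame

theorem stmt_0_general {E : Type u} (G : DGame E) (Q : G.Eqm)
    (V : E → ℝ) (hV : G.IsValueFn Q V) : G.Thm1Conds V := by
  refine ⟨fun _ _ => hV.mono, fun x hx => ?_, fun x hx L hL => ?_⟩
  · obtain ⟨c, hc, hφc⟩ := hV.exists_φ_eq hx
    rw [DGame.xi, hV.nu_preimage_eq hx hc hφc, hφc]
  · obtain ⟨c, hc, hφc⟩ := hV.exists_φ_eq hx
    exact hφc ▸ G.φ_mono.monotoneOn hc (G.nu_mem_Icc L) (hV.le_nu_of_isLCS hL hc hφc)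

/-- Theorem 1 (necessity; Lemma A.2): in any disclosure game, the sender's
value function of any truth-leaning equilibrium satisfies the Theorem-1
conditions. -/
theorem stmt_0 {E : Type u} [Countable E] (G : DGame E) (Q : G.Eqm)
    (V : E → ℝ) (hV : G.IsValueFn Q V) : G.Thm1Conds V :=
  stmt_0_general G Q V hV
end

section
/- Corollary 2 (partition characterization): In any disclosure game, a function V : E → ℝ satisfies the Theorem-1 conditions if and only if there exists an ordered partition (𝒜, ≤_P) of E satisfying the Corollary-2 conditions such that V(e) = ξ(𝒜(e)) for every e ∈ E, where 𝒜(e) denotes the cell of 𝒜 containing e. -/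
open scoped BigOperators

universe u

/-- An ordered partition of `E`: a partition into nonempty cells together with
a total order on the cells. -/
structure OPart (E : Type u) where
  cells : Set (Set E)
  cells_nonempty : ∀ A ∈ cells, A.Nonempty
  cover : ∀ e : E, ∃ A ∈ cells, e ∈ A
  disj : ∀ A ∈ cells, ∀ B ∈ cells, A ≠ B → Disjoint A B
  le : Set E → Set E → Prop
  le_refl : ∀ A ∈ cells, le A A
  le_trans : ∀ A ∈ cells, ∀ B ∈ cells, ∀ C ∈ cells, le A B → le B C → le A C
  le_antisymm : ∀ A ∈ cells, ∀ B ∈ cells, le A B → le B A → A = B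
  le_total : ∀ A ∈ cells, ∀ B ∈ cells, le A B ∨ le B A

/-- The Corollary-2 conditions on an ordered partition. -/
def Crl2Conds {E : Type u} (G : DGame E) (P : OPart E) : Prop :=
  (∀ A ∈ P.cells, ∀ B ∈ P.cells, P.le A B → A ≠ B → G.xi A < G.xi B) ∧
  (∀ A ∈ P.cells, ∀ B ∈ P.cells, ∀ e₁ ∈ A, ∀ e₂ ∈ B, G.r e₁ e₂ → P.le A B) ∧
  (∀ A ∈ P.cells, ∀ L : Set E, G.IsLCS A L → G.xi A ≤ G.xi L)


/-!
The level sets of a function satisfying the Theorem-1 conditions, ordered by value, form the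
required partition: condition (2) says that ξ of a level set is the value taken on it.
Conversely, ξ is strictly increasing along the order of the cells, hence injective on them, so the
level sets of `e ↦ ξ(𝒜(e))` are exactly the cells and the Corollary-2 conditions turn into the
Theorem-1 conditions.
-/

namespace OPart

variable {E : Type u}

theorem eq_of_mem_of_mem (P : OPart E) {A B : Set E} (hA : A ∈ P.cells) (hB : B ∈ P.cells)
    {e : E} (heA : e ∈ A) (heB : e ∈ B) : A = B := by
  by_contra hne
  exact Set.disjoint_left.mp (P.disj A hA B hB hne) heA heB

theorem apply_eq_of_mem (P : OPart E) {α : Type*} {f : E → α} {g : Set E → α}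
    (hfg : ∀ e, ∃ A ∈ P.cells, e ∈ A ∧ f e = g A) {A : Set E} (hA : A ∈ P.cells) {e : E}
    (he : e ∈ A) : f e = g A := by
  obtain ⟨B, hB, heB, hfB⟩ := hfg e
  rwa [P.eq_of_mem_of_mem hB hA heB he] at hfB

def fibers {α : Type*} [LinearOrder α] (V : E → α) : OPart E where
  cells := Set.range fun e => V ⁻¹' {V e}
  cells_nonempty := by
    rintro _ ⟨e, rfl⟩
    exact ⟨e, rfl⟩
  cover e := ⟨_, ⟨e, rfl⟩, rfl⟩
  disj := by
    rintro _ ⟨a, rfl⟩ _ ⟨b, rfl⟩ hne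
    refine Set.disjoint_left.mpr fun e (hea : V e = V a) (heb : V e = V b) => hne ?_
    dsimp only
    rw [← hea, ← heb]
  le A B := ∀ a ∈ A, ∀ b ∈ B, V a ≤ V b
  le_refl := by
    rintro _ ⟨e, rfl⟩ a (ha : V a = V e) b (hb : V b = V e)
    rw [ha, hb]
  le_trans := by
    rintro A - _ ⟨b, rfl⟩ C - hAB hBC a ha c hc
    exact (hAB a ha b rfl).trans (hBC b rfl c hc)
  le_antisymm := by
    rintro _ ⟨a, rfl⟩ _ ⟨b, rfl⟩ hab hba
    dsimp only
    rw [_root_.le_antisymm (hab a rfl b rfl) (hba b rfl a rfl)]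
  le_total := by
    rintro _ ⟨a, rfl⟩ _ ⟨b, rfl⟩
    rcases _root_.le_total (V a) (V b) with h | h
    · exact Or.inl fun x (hx : V x = V a) y (hy : V y = V b) => by rwa [hx, hy]
    · exact Or.inr fun y (hy : V y = V b) x (hx : V x = V a) => by rwa [hx, hy]

end OPart

namespace DGame

variable {E : Type u} {G : DGame E} {V : E → ℝ}

theorem Thm1Conds.xi_fiber (hV : G.Thm1Conds V) (e : E) : G.xi (V ⁻¹' {V e}) = V e :=
  hV.2.1 (V e) ⟨e, rfl⟩

theorem Thm1Conds.crl2Conds_fibers (hV : G.Thm1Conds V) : Crl2Conds G (OPart.fibers V) := by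
  refine ⟨?_, ?_, ?_⟩
  · rintro _ ⟨a, rfl⟩ _ ⟨b, rfl⟩ hle hne
    rw [hV.xi_fiber, hV.xi_fiber]
    refine (hle a rfl b rfl).lt_of_ne fun hab => hne ?_
    dsimp only
    rw [hab]
  · rintro _ ⟨a, rfl⟩ _ ⟨b, rfl⟩ e₁ (he₁ : V e₁ = V a) e₂ (he₂ : V e₂ = V b) hr
      x (hx : V x = V a) y (hy : V y = V b)
    rw [hx, hy, ← he₁, ← he₂]
    exact hV.1 e₁ e₂ hr
  · rintro _ ⟨a, rfl⟩ L hL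
    rw [hV.xi_fiber]
    exact hV.2.2 (V a) ⟨a, rfl⟩ L hL

end DGame

namespace Crl2Conds

variable {E : Type u} {G : DGame E} {P : OPart E}

theorem xi_le_of_le (h : Crl2Conds G P) {A B : Set E} (hA : A ∈ P.cells) (hB : B ∈ P.cells)
    (hle : P.le A B) : G.xi A ≤ G.xi B := by
  rcases eq_or_ne A B with rfl | hne
  · exact le_rfl
  · exact (h.1 A hA B hB hle hne).le

theorem xi_injOn (h : Crl2Conds G P) : Set.InjOn G.xi P.cells := by
  intro A hA B hB hxi
  rcases P.le_total A hA B hB with hle | hle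
  · by_contra hne
    exact (h.1 A hA B hB hle hne).ne hxi
  · by_contra hne
    exact (h.1 B hB A hA hle (Ne.symm hne)).ne hxi.symm

variable {V : E → ℝ}

theorem preimage_eq_cell (h : Crl2Conds G P)
    (hV : ∀ e : E, ∃ A ∈ P.cells, e ∈ A ∧ V e = G.xi A) {A : Set E} (hA : A ∈ P.cells) {e : E}
    (he : e ∈ A) : V ⁻¹' {V e} = A := by
  ext e'
  obtain ⟨B, hB, he'B, hVB⟩ := hV e'
  rw [Set.mem_preimage, Set.mem_singleton_iff, hVB, P.apply_eq_of_mem hV hA he]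
  refine ⟨fun hxi => h.xi_injOn hB hA hxi ▸ he'B, fun he'A => ?_⟩
  rw [P.eq_of_mem_of_mem hB hA he'B he'A]

theorem thm1Conds (h : Crl2Conds G P) (hV : ∀ e : E, ∃ A ∈ P.cells, e ∈ A ∧ V e = G.xi A) :
    G.Thm1Conds V := by
  refine ⟨?_, ?_, ?_⟩
  · intro e e' hr
    obtain ⟨A, hA, heA, hVA⟩ := hV e
    obtain ⟨B, hB, heB, hVB⟩ := hV e'
    rw [hVA, hVB]
    exact h.xi_le_of_le hA hB (h.2.1 A hA B hB e heA e' heB hr)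
  · rintro _ ⟨e, rfl⟩
    obtain ⟨A, hA, heA, hVA⟩ := hV e
    rw [h.preimage_eq_cell hV hA heA, hVA]
  · rintro _ ⟨e, rfl⟩ L hL
    obtain ⟨A, hA, heA, hVA⟩ := hV e
    rw [h.preimage_eq_cell hV hA heA] at hL
    rw [hVA]
    exact h.2.2 A hA L hL

end Crl2Conds

theorem stmt_4_general {E : Type u} (G : DGame E) (V : E → ℝ) :
    G.Thm1Conds V ↔
      ∃ P : OPart E, Crl2Conds G P ∧ ∀ e : E, ∃ A ∈ P.cells, e ∈ A ∧ V e = G.xi A := by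
  constructor
  · intro hV
    exact ⟨OPart.fibers V, hV.crl2Conds_fibers,
      fun e => ⟨_, ⟨e, rfl⟩, rfl, (hV.xi_fiber e).symm⟩⟩
  · rintro ⟨P, hP, hVP⟩
    exact hP.thm1Conds hVP

/-- Corollary 2 (partition characterization): `V` satisfies the Theorem-1
conditions iff there is an ordered partition satisfying the Corollary-2
conditions with `V(e) = ξ(𝒜(e))` for every `e`. -/
theorem stmt_4 {E : Type u} [Countable E] (G : DGame E) (V : E → ℝ) :
    G.Thm1Conds V ↔
      ∃ P : OPart E, Crl2Conds G P ∧ ∀ e : E, ∃ A ∈ P.cells, e ∈ A ∧ V e = G.xi A :=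
  stmt_4_general G V
end

section
/- In the left-censored disclosure model, for every n ∈ ℕ let E_n = {e ∈ E : N(e) = n}. Then ∑_{e∈E_n} F_G(e) = ((q−α)/q)·(α/q)ⁿ and ∑_{e∈E_n} F_B(e) = ((p−α)/p)·(α/p)ⁿ. Consequently ν(E_n) = 1 / (1 + ((1−π₀)/π₀)·((p−α)/(q−α))·(q/p)^{n+1}). -/
open scoped BigOperators

namespace LeftCensored

/-- Evidence: a finite sequence of binary signals; `true` stands for a high
return (`g`) and `false` for a low return (`b`). A sequence is a list whose
suffixes are the most recent signals. -/
abbrev Ev := List Bool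

/-- `G(e)`: the number of `g`'s in `e`. -/
def Gc (e : Ev) : ℕ := e.count true

/-- `B(e)`: the number of `b`'s in `e`. -/
def Bc (e : Ev) : ℕ := e.count false

/-- `D(e) = G(e) − B(e)`. -/
def D (e : Ev) : ℤ := (Gc e : ℤ) - (Bc e : ℤ)

/-- `N(e) = max_{0 ≤ k ≤ L(e)} D(e|_k)`, the maximum of `D` over all suffixes
(truncations from the left) of `e`; since the empty suffix gives `D = 0`, this
equals the fold of `max` over the suffixes starting from `0`. -/
def N (e : Ev) : ℤ := (e.tails.map D).foldr max 0

/-- The evidence distribution in the good state. -/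
noncomputable def FG (p q : ℝ) (e : Ev) : ℝ := (1 - p - q) * p ^ Gc e * q ^ Bc e

/-- The evidence distribution in the bad state. -/
noncomputable def FB (p q : ℝ) (e : Ev) : ℝ := (1 - p - q) * p ^ Bc e * q ^ Gc e

/-- Posterior belief `ν(A)` that the state is good given evidence in `A`. -/
noncomputable def nu (p q π0 : ℝ) (A : Set Ev) : ℝ :=
  ((∑' e : A, FG p q e) * π0) /
    ((∑' e : A, FG p q e) * π0 + (∑' e : A, FB p q e) * (1 - π0))

/-- `α = (1 − √(1 − 4pq))/2`. -/
noncomputable def alpha (p q : ℝ) : ℝ := (1 - Real.sqrt (1 - 4 * p * q)) / 2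

/-- The sender's equilibrium value function (Proposition 4). -/
noncomputable def V (p q π0 : ℝ) (e : Ev) : ℝ :=
  1 / (1 + ((1 - π0) / π0) * ((p - alpha p q) / (q - alpha p q)) * (q / p) ^ (N e + 1))

/-- `L` is a (nonempty) lower contour set in `A` with respect to the suffix
(left-censoring) order. -/
def IsLCS (A L : Set Ev) : Prop :=
  L.Nonempty ∧ L ⊆ A ∧ ∀ e ∈ L, ∀ e' ∈ A, e' <:+ e → e' ∈ L

/-- A truth-leaning equilibrium of the left-censored disclosure game (the
receiver's response `φ` is the identity). -/
structure Eqm (p q π0 : ℝ) where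
  σ : Ev → Ev → ℝ
  act : Ev → ℝ
  μ : Ev → ℝ
  σ_nonneg : ∀ e m, 0 ≤ σ e m
  σ_hasSum : ∀ e, HasSum (σ e) 1
  feasible : ∀ e m, 0 < σ e m → m <:+ e
  μ_mem : ∀ m, μ m ∈ Set.Icc (0 : ℝ) 1
  sender_opt : ∀ e m, 0 < σ e m → ∀ m', m' <:+ e → act m' ≤ act m
  receiver_opt : ∀ m, act m = μ m
  bayes : ∀ m, (∃ e, 0 < σ e m) →
    μ m = (∑' e : {e : Ev // m <:+ e}, σ e.1 m * FG p q e.1 * π0) /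
      (∑' e : {e : Ev // m <:+ e}, σ e.1 m * (FG p q e.1 * π0 + FB p q e.1 * (1 - π0)))
  truth_leaning : ∀ e, (∀ m, m <:+ e → act m ≤ act e) → σ e e = 1
  offpath : ∀ m, (¬ ∃ e, 0 < σ e m) → μ m = nu p q π0 {m}

end LeftCensored

/-!
Write `S n = ∑_{N e = n} p ^ G(e) q ^ B(e)`. Since `N (l ++ [a]) = max 0 (N l ± 1)`, splitting off
the last signal gives `S (n + 1) = p S n + q S (n + 2)` and `S 0 = 1 + q (S 0 + S 1)`. The
characteristic roots of this recurrence are `α / q` and `(1 - α) / q > 1`, and `S` is bounded by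
the total mass `∑_e p ^ G(e) q ^ B(e) < ∞`, so `S n = S 0 (α / q) ^ n`, and the boundary equation
gives `S 0 = 1 / (1 - q - α)`. `F_B` is `F_G` with `p` and `q` exchanged, and `ν(E_n)` is the
posterior odds formula applied to the two masses.
-/

theorem List.summable_prod_map {α : Type*} [Fintype α] {w : α → ℝ} (hw : ∀ a, 0 ≤ w a)
    (hw1 : ∑ a, w a < 1) : Summable fun l : List α => (l.map w).prod := by
  classical
  rw [← List.equivSigmaTuple.symm.summable_iff]
  refine (summable_sigma_of_nonneg fun l => ?_).2 ⟨fun n => Summable.of_finite, ?_⟩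
  · exact List.prod_nonneg fun a ha => by
      obtain ⟨b, -, rfl⟩ := List.mem_map.1 ha; exact hw b
  · have h (n : ℕ) : ∑' f : Fin n → α, ((List.ofFn f).map w).prod = (∑ a, w a) ^ n := by
      simp [tsum_fintype, List.map_ofFn, List.prod_ofFn, ← Fintype.prod_sum]
    simp only [Function.comp_def, List.equivSigmaTuple_symm_apply, h]
    exact summable_geometric_of_lt_one (Finset.sum_nonneg fun a _ => hw a) hw1

theorem List.tsum_eq_add_tsum_concat {α : Type*} {f : List α → ℝ} (hf : Summable f) :
    ∑' l, f l = f [] + ∑' a, ∑' l, f (l ++ [a]) := by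
  classical
  have hinj : Function.Injective fun p : α × List α => p.2 ++ [p.1] := by
    rintro ⟨a, l⟩ ⟨b, m⟩ h
    simp_all
  rw [hf.tsum_eq_add_tsum_ite []]
  congr 1
  rw [← hinj.tsum_eq]
  · simpa using (hf.comp_injective hinj).tsum_prod
  · intro l hl
    have hne : l ≠ [] := fun h => hl (by simp [h])
    exact ⟨(l.getLast hne, l.dropLast), List.dropLast_append_getLast hne⟩

theorem eq_mul_of_linear_recurrence_of_bounded {u : ℕ → ℝ} {r s C : ℝ} (hs : 1 < |s|)
    (hu : ∀ n, |u n| ≤ C) (hrec : ∀ n, u (n + 2) = (r + s) * u (n + 1) - r * s * u n)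
    (n : ℕ) : u (n + 1) = r * u n := by
  set t : ℕ → ℝ := fun n => u (n + 1) - r * u n with ht
  -- `t` is a geometric sequence of ratio `s`, bounded only if it vanishes
  have ht_pow (n : ℕ) : t n = s ^ n * t 0 := by
    induction n with
    | zero => simp
    | succ n ih => rw [pow_succ, mul_comm _ s, mul_assoc, ← ih, ht]; dsimp only; rw [hrec]; ring
  have ht_le (n : ℕ) : |s| ^ n * |t 0| ≤ C + |r| * C := by
    rw [← abs_pow, ← abs_mul, ← ht_pow]
    calc |u (n + 1) - r * u n| ≤ |u (n + 1)| + |r| * |u n| := by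
          rw [← abs_mul]; exact abs_sub _ _
      _ ≤ C + |r| * C := by gcongr <;> exact hu _
  have ht0 : t 0 = 0 := by
    by_contra h
    obtain ⟨m, hm⟩ := pow_unbounded_of_one_lt ((C + |r| * C) / |t 0|) hs
    have := ht_le m
    rw [div_lt_iff₀ (abs_pos.2 h)] at hm
    linarith
  have := ht_pow n
  rw [ht0, mul_zero] at this
  exact sub_eq_zero.1 this

namespace LeftCensored

lemma D_append_singleton (l : Ev) (a : Bool) :
    D (l ++ [a]) = D l + if a then 1 else -1 := by
  cases a <;> simp [D, Gc, Bc] <;> ring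

lemma N_nil : N [] = 0 := rfl

lemma N_cons (a : Bool) (l : Ev) : N (a :: l) = max (D (a :: l)) (N l) := by
  simp [N, List.tails]

lemma N_nonneg (e : Ev) : 0 ≤ N e := by
  induction e with
  | nil => exact N_nil.ge
  | cons a l ih => rw [N_cons]; exact le_max_of_le_right ih

lemma N_append_singleton (l : Ev) (a : Bool) :
    N (l ++ [a]) = max 0 (N l + if a then 1 else -1) := by
  induction l with
  | nil => cases a <;> simp [N, D, Gc, Bc]
  | cons b l ih =>
    rw [List.cons_append, N_cons, N_cons, ih, ← List.cons_append, D_append_singleton]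
    omega

section Alpha

variable {x y : ℝ}

lemma alpha_comm (x y : ℝ) : alpha x y = alpha y x := by
  rw [alpha, alpha, mul_right_comm]

lemma alpha_mul_one_sub (hx : 0 ≤ x) (hy : 0 ≤ y) (hxy : x + y < 1) :
    alpha x y * (1 - alpha x y) = x * y := by
  have h := Real.sq_sqrt (show 0 ≤ 1 - 4 * x * y by nlinarith [sq_nonneg (x - y)])
  rw [alpha]
  linear_combination (-1 / 4 : ℝ) * h

lemma abs_one_sub_two_mul_lt_sqrt (hy : 0 < y) (hxy : x + y < 1) :
    |1 - 2 * y| < √(1 - 4 * x * y) :=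
  (Real.lt_sqrt (abs_nonneg _)).2 (by rw [sq_abs]; nlinarith)

lemma alpha_lt (hy : 0 < y) (hxy : x + y < 1) : alpha x y < y := by
  have := (abs_lt.1 (abs_one_sub_two_mul_lt_sqrt hy hxy)).2
  rw [alpha]; linarith

lemma alpha_lt_one_sub (hy : 0 < y) (hxy : x + y < 1) : alpha x y < 1 - y := by
  have := (abs_lt.1 (abs_one_sub_two_mul_lt_sqrt hy hxy)).1
  rw [alpha]; linarith

lemma alpha_pos (hx : 0 < x) (hy : 0 < y) : 0 < alpha x y := by
  have : √(1 - 4 * x * y) < 1 := (Real.sqrt_lt' one_pos).2 (by nlinarith)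
  rw [alpha]; linarith

end Alpha

noncomputable def weight (x y : ℝ) (e : Ev) : ℝ := x ^ Gc e * y ^ Bc e

lemma weight_eq_prod_map (x y : ℝ) (e : Ev) :
    weight x y e = (e.map fun b => if b then x else y).prod := by
  induction e with
  | nil => simp [weight, Gc, Bc]
  | cons a l ih =>
    rw [List.map_cons, List.prod_cons, ← ih]
    cases a <;> simp [weight, Gc, Bc, pow_succ] <;> ring

lemma weight_nil (x y : ℝ) : weight x y [] = 1 := by
  simp [weight, Gc, Bc]

lemma weight_nonneg {x y : ℝ} (hx : 0 ≤ x) (hy : 0 ≤ y) (e : Ev) : 0 ≤ weight x y e := by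
  unfold weight; positivity

lemma weight_append_singleton (x y : ℝ) (l : Ev) (a : Bool) :
    weight x y (l ++ [a]) = weight x y l * if a then x else y := by
  simp [weight_eq_prod_map]

lemma summable_weight {x y : ℝ} (hx : 0 ≤ x) (hy : 0 ≤ y) (hxy : x + y < 1) :
    Summable (weight x y) := by
  simp only [funext (weight_eq_prod_map x y)]
  exact List.summable_prod_map (by simp [hx, hy]) (by simpa [add_comm] using hxy)

lemma FG_eq_mul_weight (p q : ℝ) (e : Ev) : FG p q e = (1 - p - q) * weight p q e := by
  rw [FG, weight, mul_assoc]

lemma FB_eq_FG (p q : ℝ) (e : Ev) : FB p q e = FG q p e := by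
  rw [FB, FG]; ring

noncomputable def levelMass (x y : ℝ) (n : ℕ) : ℝ :=
  ∑' e, {e : Ev | N e = n}.indicator (weight x y) e

lemma levelMass_nonneg {x y : ℝ} (hx : 0 ≤ x) (hy : 0 ≤ y) (n : ℕ) : 0 ≤ levelMass x y n :=
  tsum_nonneg fun e => Set.indicator_nonneg (fun e _ => weight_nonneg hx hy e) e

section LevelMass

variable {x y : ℝ} (hx : 0 ≤ x) (hy : 0 ≤ y) (hxy : x + y < 1)
include hx hy hxy

lemma tsum_indicator_weight (s : Set Ev) :
    ∑' e, s.indicator (weight x y) e = s.indicator (weight x y) [] +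
      x * ∑' l, {l | l ++ [true] ∈ s}.indicator (weight x y) l +
      y * ∑' l, {l | l ++ [false] ∈ s}.indicator (weight x y) l := by
  have hsnoc (a : Bool) (l : Ev) : s.indicator (weight x y) (l ++ [a]) =
      (if a then x else y) * {l | l ++ [a] ∈ s}.indicator (weight x y) l := by
    by_cases h : l ++ [a] ∈ s <;> simp [Set.indicator, h, weight_append_singleton, mul_comm]
  rw [List.tsum_eq_add_tsum_concat ((summable_weight hx hy hxy).indicator s), tsum_bool]
  simp only [hsnoc, tsum_mul_left, Bool.false_eq_true, if_true, if_false]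
  ring

lemma levelMass_zero : levelMass x y 0 = 1 + y * (levelMass x y 0 + levelMass x y 1) := by
  have htrue : {l : Ev | l ++ [true] ∈ {e : Ev | N e = ((0 : ℕ) : ℤ)}} = ∅ := by
    ext l; simp [N_append_singleton]; have := N_nonneg l; omega
  have hfalse : {l : Ev | l ++ [false] ∈ {e : Ev | N e = ((0 : ℕ) : ℤ)}} =
      {e : Ev | N e = ((0 : ℕ) : ℤ)} ∪ {e : Ev | N e = ((1 : ℕ) : ℤ)} := by
    ext l; simp [N_append_singleton]; have := N_nonneg l; omega
  have hdisj : Disjoint {e : Ev | N e = ((0 : ℕ) : ℤ)} {e : Ev | N e = ((1 : ℕ) : ℤ)} :=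
    Set.disjoint_left.2 fun e h0 h1 => by simp_all
  have hsum := summable_weight hx hy hxy
  conv_lhs => rw [levelMass, tsum_indicator_weight hx hy hxy, htrue, hfalse,
    Set.indicator_union_of_disjoint hdisj, Summable.tsum_add (hsum.indicator _) (hsum.indicator _)]
  simp [Set.indicator_apply, N_nil, weight_nil, levelMass]

lemma levelMass_succ (n : ℕ) :
    levelMass x y (n + 1) = x * levelMass x y n + y * levelMass x y (n + 2) := by
  have htrue : {l : Ev | l ++ [true] ∈ {e : Ev | N e = ((n + 1 : ℕ) : ℤ)}} =
      {e : Ev | N e = (n : ℤ)} := by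
    ext l; simp [N_append_singleton]; have := N_nonneg l; omega
  have hfalse : {l : Ev | l ++ [false] ∈ {e : Ev | N e = ((n + 1 : ℕ) : ℤ)}} =
      {e : Ev | N e = ((n + 2 : ℕ) : ℤ)} := by
    ext l; simp [N_append_singleton]; have := N_nonneg l; omega
  have hnil : ([] : Ev) ∉ {e : Ev | N e = ((n + 1 : ℕ) : ℤ)} := by simp [N_nil]; omega
  conv_lhs => rw [levelMass, tsum_indicator_weight hx hy hxy, htrue, hfalse,
    Set.indicator_of_notMem hnil]
  rw [zero_add]; rfl

lemma levelMass_le_tsum_weight (n : ℕ) : levelMass x y n ≤ ∑' e, weight x y e :=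
  have hsum := summable_weight hx hy hxy
  Summable.tsum_le_tsum (fun e => Set.indicator_le_self' (fun e _ => weight_nonneg hx hy e) e)
    (hsum.indicator _) hsum

end LevelMass

section Geometric

variable {x y : ℝ} (hx : 0 ≤ x) (hy : 0 < y) (hxy : x + y < 1)
include hx hy hxy

lemma levelMass_succ_eq (n : ℕ) : levelMass x y (n + 1) = alpha x y / y * levelMass x y n := by
  have hα := alpha_mul_one_sub hx hy.le hxy
  refine eq_mul_of_linear_recurrence_of_bounded (s := (1 - alpha x y) / y) ?_
    (fun n => (abs_of_nonneg (levelMass_nonneg hx hy.le n)).trans_le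
      (levelMass_le_tsum_weight hx hy.le hxy n)) (fun n => ?_) n
  · exact lt_abs.2 (Or.inl ((one_lt_div hy).2 (by linarith [alpha_lt_one_sub hy hxy])))
  · have := levelMass_succ hx hy.le hxy n
    field_simp
    linear_combination (-y) * this + levelMass x y n * hα

lemma levelMass_eq (n : ℕ) :
    levelMass x y n = (alpha x y / y) ^ n / (1 - y - alpha x y) := by
  have hgeom (n : ℕ) : levelMass x y n = levelMass x y 0 * (alpha x y / y) ^ n := by
    induction n with
    | zero => simp
    | succ n ih => rw [levelMass_succ_eq hx hy hxy, ih, pow_succ]; ring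
  have h0 := levelMass_zero hx hy.le hxy
  rw [hgeom 1, pow_one] at h0
  have h1 : levelMass x y 0 * (1 - y - alpha x y) = 1 := by
    field_simp at h0
    linarith
  rw [hgeom n, eq_div_iff (by linarith [alpha_lt_one_sub hy hxy])]
  linear_combination (alpha x y / y) ^ n * h1

lemma tsum_FG_level (n : ℕ) :
    ∑' e : {e : Ev // N e = (n : ℤ)}, FG x y e.1 =
      ((y - alpha x y) / y) * (alpha x y / y) ^ n := by
  have hα := alpha_mul_one_sub hx hy.le hxy
  have hsub : 1 - y - alpha x y ≠ 0 := by linarith [alpha_lt_one_sub hy hxy]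
  have hlevel : ∑' e : {e : Ev // N e = (n : ℤ)}, weight x y e.1 = levelMass x y n :=
    tsum_subtype {e : Ev | N e = (n : ℤ)} (weight x y)
  simp only [FG_eq_mul_weight]
  rw [tsum_mul_left, hlevel, levelMass_eq hx hy hxy]
  field_simp
  linear_combination (alpha x y / y) ^ n * hα

end Geometric

lemma nu_eq_one_div_one_add {p q π0 a b : ℝ} {A : Set Ev} (hA : ∑' e : A, FG p q e = a)
    (hB : ∑' e : A, FB p q e = b) (ha : a ≠ 0) (hπ0 : π0 ≠ 0) :
    nu p q π0 A = 1 / (1 + (1 - π0) / π0 * (b / a)) := by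
  rw [nu, hA, hB, show 1 + (1 - π0) / π0 * (b / a) = (a * π0 + b * (1 - π0)) / (a * π0) by
    field_simp, one_div_div]

theorem stmt_11_general (p q π0 : ℝ) (hq0 : 0 < q) (hqp : q < p)
    (hpq1 : p + q < 1) (h0 : 0 < π0) (n : ℕ) :
    (∑' e : {e : Ev // N e = (n : ℤ)}, FG p q e.1)
        = ((q - alpha p q) / q) * (alpha p q / q) ^ n ∧
    (∑' e : {e : Ev // N e = (n : ℤ)}, FB p q e.1)
        = ((p - alpha p q) / p) * (alpha p q / p) ^ n ∧
    nu p q π0 {e : Ev | N e = (n : ℤ)}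
        = 1 / (1 + ((1 - π0) / π0) * ((p - alpha p q) / (q - alpha p q)) * (q / p) ^ (n + 1)) := by
  have hp : 0 < p := hq0.trans hqp
  have hα : 0 < alpha p q := alpha_pos hp hq0
  have hαq : 0 < q - alpha p q := sub_pos.2 (alpha_lt hq0 hpq1)
  have hG := tsum_FG_level hp.le hq0 hpq1 n
  have hB : ∑' e : {e : Ev // N e = (n : ℤ)}, FB p q e.1 =
      ((p - alpha p q) / p) * (alpha p q / p) ^ n := by
    simp only [FB_eq_FG]
    rw [tsum_FG_level hq0.le hp (by linarith) n, alpha_comm]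
  have hratio : ((p - alpha p q) / p * (alpha p q / p) ^ n) /
      ((q - alpha p q) / q * (alpha p q / q) ^ n) =
      (p - alpha p q) / (q - alpha p q) * (q / p) ^ (n + 1) := by
    rw [div_pow, div_pow, div_pow]
    field_simp [hα.ne', hαq.ne', hp.ne', hq0.ne']
    ring
  refine ⟨hG, hB, ?_⟩
  rw [nu_eq_one_div_one_add (A := {e : Ev | N e = (n : ℤ)}) hG hB (by positivity) h0.ne',
    hratio, mul_assoc]

/-- Conditional masses of the sets `E_n = {e : N(e) = n}` and the resulting
posterior `ν(E_n)`. -/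
theorem stmt_11 (p q π0 : ℝ) (hq0 : 0 < q) (hqp : q < p) (hp1 : p < 1)
    (hpq0 : 0 < p + q) (hpq1 : p + q < 1) (h0 : 0 < π0) (h1 : π0 < 1) (n : ℕ) :
    (∑' e : {e : Ev // N e = (n : ℤ)}, FG p q e.1)
        = ((q - alpha p q) / q) * (alpha p q / q) ^ n ∧
    (∑' e : {e : Ev // N e = (n : ℤ)}, FB p q e.1)
        = ((p - alpha p q) / p) * (alpha p q / p) ^ n ∧
    nu p q π0 {e : Ev | N e = (n : ℤ)}
        = 1 / (1 + ((1 - π0) / π0) * ((p - alpha p q) / (q - alpha p q)) * (q / p) ^ (n + 1)) :=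
  stmt_11_general p q π0 hq0 hqp hpq1 h0 n

end LeftCensored
end
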